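/- arXiv:2202.09478 — 3 statements merged into one kernel-verified Lean document; each statement's English description precedes it below -/
import Mathlib

section
/- Let Θ and Ξ be arbitrary types, let S ≥ 1 and k ∈ ℕ, let η : Fin S → Θ → ℝ and T : Fin S → Ξ → ℝ, and set D = Nat.choose (k + S - 1) (S - 1). Then for every M ∈ ℕ there exist n : Θ → Fin D → ℝ and t : (Fin M → Ξ) → Fin D → ℝ such that for all θ ∈ Θ and ξ : Fin M → Ξ, ∑_{i : Fin M} (∑_{s : Fin S} η s θ · T s (ξ i))^k = ∑_{j : Fin D} n θ j · t ξ j. That is, the Monte Carlo sum of g(w) = w^k for weights W(θ,ξ) = ∑_s η_s(θ) T_s(ξ) admits a factorization whose size D = C(k+S−1, S−1) is independent of the number of Monte Carlo iterations M. (Theorem 2.) -/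
/-!
By the multinomial theorem, `(∑ s, η s θ * T s ξ) ^ k` is a sum, over the exponent vectors
`d : Fin S → ℕ` with `∑ s, d s = k`, of a monomial in the `η s θ` times a monomial in the `T s ξ`;
there are `C(k + S - 1, S - 1)` such vectors. Summing over the `M` samples only sums the
`ξ`-factors, so the number of terms does not depend on `M`.
-/

open Finset

def HasFactorization {Θ X : Type*} (D : ℕ) (F : Θ → X → ℝ) : Prop :=
  ∃ (n : Θ → Fin D → ℝ) (t : X → Fin D → ℝ), ∀ θ ξ, F θ ξ = ∑ j, n θ j * t ξ j

namespace HasFactorization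

variable {Θ X : Type*} {D : ℕ} {F : Θ → X → ℝ}

theorem of_sum_finset {ι : Type*} (A : Finset ι) (n : Θ → ι → ℝ) (t : X → ι → ℝ) :
    HasFactorization #A fun θ ξ ↦ ∑ a ∈ A, n θ a * t ξ a := by
  refine ⟨fun θ j ↦ n θ (A.equivFin.symm j), fun ξ j ↦ t ξ (A.equivFin.symm j), fun θ ξ ↦ ?_⟩
  dsimp only
  rw [← sum_coe_sort A]
  exact (Fintype.sum_equiv A.equivFin.symm _ _ fun _ ↦ rfl).symm

theorem sum_samples {ι : Type*} [Fintype ι] (h : HasFactorization D F) :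
    HasFactorization D fun θ (ξ : ι → X) ↦ ∑ i, F θ (ξ i) := by
  obtain ⟨n, t, hF⟩ := h
  refine ⟨n, fun ξ j ↦ ∑ i, t (ξ i) j, fun θ ξ ↦ ?_⟩
  simp_rw [hF, mul_sum]
  exact sum_comm

end HasFactorization

theorem card_piAntidiag_univ (ι : Type*) [Fintype ι] [DecidableEq ι] (k : ℕ) :
    #(piAntidiag (univ : Finset ι) k) = (Fintype.card ι).multichoose k := by
  rw [← map_sym_eq_piAntidiag, card_map, ← Sym.card_sym_eq_multichoose, ← card_univ]
  congr
  ext m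
  simp

theorem Nat.multichoose_eq_choose_pred {S : ℕ} (hS : 1 ≤ S) (k : ℕ) :
    S.multichoose k = (k + S - 1).choose (S - 1) := by
  obtain ⟨S, rfl⟩ := Nat.exists_eq_add_of_le' hS
  rw [Nat.multichoose_eq, Nat.add_sub_cancel, show S + 1 + k - 1 = S + k by omega,
    show k + (S + 1) - 1 = S + k by omega, Nat.choose_symm_add]

theorem pow_sum_mul_eq_sum_piAntidiag {ι R : Type*} [Fintype ι] [DecidableEq ι] [CommSemiring R]
    (x y : ι → R) (k : ℕ) :
    (∑ s, x s * y s) ^ k =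
      ∑ d ∈ piAntidiag univ k, ((Nat.multinomial univ d : R) * ∏ s, x s ^ d s) * ∏ s, y s ^ d s := by
  rw [sum_pow_eq_sum_piAntidiag]
  refine sum_congr rfl fun d _ ↦ ?_
  simp_rw [mul_pow, prod_mul_distrib, mul_assoc]

theorem hasFactorization_pow_linear_family {Θ X ι : Type*} [Fintype ι] [DecidableEq ι]
    (η : ι → Θ → ℝ) (T : ι → X → ℝ) (k : ℕ) :
    HasFactorization #(piAntidiag (univ : Finset ι) k) fun θ ξ ↦ (∑ s, η s θ * T s ξ) ^ k := by
  simp_rw [pow_sum_mul_eq_sum_piAntidiag]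
  exact HasFactorization.of_sum_finset _ _ _

/-- Theorem 2: for weights `W(θ,ξ) = ∑ s, η s θ * T s ξ` and `g(w) = w^k`, the
Monte Carlo sum admits, for every `M`, a factorization of size
`D = C(k + S - 1, S - 1)`, independent of the number of MC iterations `M`. -/
theorem mc_repar_linear_family_pow {Θ Ξ : Type*} (S k : ℕ) (hS : 1 ≤ S)
    (η : Fin S → Θ → ℝ) (T : Fin S → Ξ → ℝ) :
    ∀ M : ℕ, ∃ (n : Θ → Fin ((k + S - 1).choose (S - 1)) → ℝ)
      (t : (Fin M → Ξ) → Fin ((k + S - 1).choose (S - 1)) → ℝ),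
      ∀ (θ : Θ) (ξ : Fin M → Ξ),
        ∑ i : Fin M, (∑ s : Fin S, η s θ * T s (ξ i)) ^ k =
          ∑ j, n θ j * t ξ j := by
  intro M
  have h := (hasFactorization_pow_linear_family η T k).sum_samples (ι := Fin M)
  rwa [card_piAntidiag_univ, Fintype.card_fin, Nat.multichoose_eq_choose_pred hS] at h
end

section
/- Let Θ and Ξ be arbitrary types, let S ≥ 2 and k ∈ ℕ, let η : Fin S → Θ → ℝ and T : Fin S → Ξ → ℝ, and let f, g : ℝ → ℝ satisfy g (f w) = w^k for all w ∈ ℝ. Set D = Nat.choose (k + S - 1) (S - 1). Then for every M ∈ ℕ there exist n : Θ → Fin D → ℝ and t : (Fin M → Ξ) → Fin D → ℝ such that for all θ and ξ, ∑_{i : Fin M} g (f (∑_{s : Fin S} η s θ · T s (ξ i))) = ∑_{j : Fin D} n θ j · t ξ j. That is, Theorem 2 extends to transformed weights W' = f(W): the Monte Carlo sum admits a factorization of size C(k+S−1, S−1) independent of M. (Corollary 2.) -/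
/-!
By the multinomial theorem, `(∑ s, η s θ * T s x) ^ k` is a sum over the multisets `m` of size `k`
in `Fin S` of `countPerms m * ∏_{s ∈ m} η s θ` times `∏_{s ∈ m} T s x`, so it separates `θ` from
`x` through `C(k + S - 1, S - 1)` terms (stars and bars). The hypothesis `g ∘ f = (· ^ k)` reduces
each Monte Carlo summand to this power, and summing over the `M` samples only changes the noise
factors, so the size of the factorization does not depend on `M`.
-/

open Finset

section Factorization

variable {Θ X : Type*}

def AdmitsFactorization (ι : Type*) [Fintype ι] (F : Θ → X → ℝ) : Prop :=
  ∃ (n : Θ → ι → ℝ) (t : X → ι → ℝ), ∀ θ x, F θ x = ∑ j, n θ j * t x j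

namespace AdmitsFactorization

variable {ι ι' : Type*} [Fintype ι] [Fintype ι'] {F : Θ → X → ℝ}

theorem of_equiv (e : ι ≃ ι') (hF : AdmitsFactorization ι F) : AdmitsFactorization ι' F := by
  obtain ⟨n, t, hnt⟩ := hF
  refine ⟨fun θ j => n θ (e.symm j), fun x j => t x (e.symm j), fun θ x => ?_⟩
  rw [hnt, ← e.symm.sum_comp]

theorem sum_samples {κ : Type*} [Fintype κ] (hF : AdmitsFactorization ι F) :
    AdmitsFactorization ι (fun θ (ξ : κ → X) => ∑ i, F θ (ξ i)) := by
  obtain ⟨n, t, hnt⟩ := hF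
  refine ⟨n, fun ξ j => ∑ i, t (ξ i) j, fun θ ξ => ?_⟩
  simp only [hnt, mul_sum]
  exact sum_comm

end AdmitsFactorization

theorem sum_mul_pow_eq_sum_sym {σ R : Type*} [Fintype σ] [DecidableEq σ] [CommSemiring R]
    (a b : σ → R) (k : ℕ) :
    (∑ s, a s * b s) ^ k =
      ∑ m : Sym σ k, (m.val.countPerms * (m.val.map a).prod) * (m.val.map b).prod := by
  rw [sum_pow, sym_univ]
  refine sum_congr rfl fun m _ => ?_
  rw [Multiset.prod_map_mul, mul_assoc]

theorem admitsFactorization_pow_sum_mul {σ : Type*} [Fintype σ] [DecidableEq σ]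
    (η : σ → Θ → ℝ) (T : σ → X → ℝ) (k : ℕ) :
    AdmitsFactorization (Sym σ k) (fun θ x => (∑ s, η s θ * T s x) ^ k) :=
  ⟨fun θ m => m.val.countPerms * (m.val.map (η · θ)).prod, fun x m => (m.val.map (T · x)).prod,
    fun θ x => sum_mul_pow_eq_sum_sym (η · θ) (T · x) k⟩

end Factorization

theorem Sym.card_fin_eq_choose {S : ℕ} (hS : 1 ≤ S) (k : ℕ) :
    Fintype.card (Sym (Fin S) k) = (k + S - 1).choose (S - 1) := by
  rw [Sym.card_sym_eq_choose, Fintype.card_fin, add_comm S k]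
  exact Nat.choose_symm_of_eq_add (by omega)

/-- Corollary 2: Theorem 2 extends to transformed weights `W' = f(W)` with
`W(θ,ξ) = ∑ s, η s θ * T s ξ`, `S ≥ 2`.  If `g (f w) = w^k` for all `w`, the
Monte Carlo sum admits a factorization of size `C(k + S - 1, S - 1)`
independent of `M`. -/
theorem mc_repar_transformed_linear_family {Θ Ξ : Type*} (S k : ℕ) (hS : 2 ≤ S)
    (η : Fin S → Θ → ℝ) (T : Fin S → Ξ → ℝ) (f g : ℝ → ℝ)
    (hgf : ∀ w : ℝ, g (f w) = w ^ k) :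
    ∀ M : ℕ, ∃ (n : Θ → Fin ((k + S - 1).choose (S - 1)) → ℝ)
      (t : (Fin M → Ξ) → Fin ((k + S - 1).choose (S - 1)) → ℝ),
      ∀ (θ : Θ) (ξ : Fin M → Ξ),
        ∑ i : Fin M, g (f (∑ s : Fin S, η s θ * T s (ξ i))) =
          ∑ j, n θ j * t ξ j := by
  intro M
  have hsum := (admitsFactorization_pow_sum_mul η T k).sum_samples (κ := Fin M)
  have hsize := hsum.of_equiv (Fintype.equivFinOfCardEq (Sym.card_fin_eq_choose (by omega) k))
  simpa only [AdmitsFactorization, hgf] using hsize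
end

section
/- Let Θ and Ξ be arbitrary types, let S ≥ 2 and K ∈ ℕ, let η : Fin S → Θ → ℝ, T : Fin S → Ξ → ℝ, let a ∈ ℝ, and let c : Fin (K+1) → ℝ. Suppose in addition that there exist j : Fin S and c₀ ∈ ℝ with c₀ ≠ 0 such that T j ξ = c₀ for all ξ ∈ Ξ. Set D = Nat.choose (K + S) S - 1. Then for every M ∈ ℕ there exist n : Θ → Fin D → ℝ, t : (Fin M → Ξ) → Fin D → ℝ, and a constant r ∈ ℝ (independent of θ and ξ) such that for all θ and ξ, ∑_{i : Fin M} ∑_{k = 0}^{K} c k · (∑_{s : Fin S} η s θ · T s (ξ i) - a)^k = ∑_{j : Fin D} n θ j · t ξ j + r. That is, when one sufficient statistic is a nonzero constant, the shift −a can be absorbed (Lemma 1) and the Taylor-approximated Monte Carlo sum factorizes as a degree-K polynomial in the original S indeterminates, with size independent of M. (Theorem 4, second route.) -/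
/-!
Since `T j ≡ c₀ ≠ 0`, the shift is a change of parameters (Lemma 1):
`∑ s, η s θ * T s ξ - a = ∑ s, u s θ * T s ξ` with `u = η - (a / c₀) • e_j`.
The multinomial theorem writes each power of `∑ s, u s θ * T s ξ` as a sum over multi-indices
`α`, of terms `(coefficient * ∏ u ^ α) * ∏ T ^ α`; summing over the samples gives
`∑ α, n_α θ * t_α ξ` with `t_α ξ = ∑ i, ∏ T (ξ i) ^ α`, whose length does not depend on `M`.
The multi-indices of degree at most `K` on `Fin S` number at most `C(K + S, S)`, since the slack
`K - |α|` completes `α` to a multi-index of degree `K` on `Fin (S + 1)`, and the term of `α = 0`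
is the constant `c 0 * M`.
-/

open Finset Function

lemma Finset.exists_sum_fin_mul_eq_sum_mul {ι X Y R : Type*} [CommSemiring R] {s : Finset ι}
    {D : ℕ} (hs : #s ≤ D) (A : ι → X → R) (B : ι → Y → R) :
    ∃ (n : X → Fin D → R) (t : Y → Fin D → R),
      ∀ x y, ∑ i ∈ s, A i x * B i y = ∑ d : Fin D, n x d * t y d := by
  obtain ⟨e⟩ : Nonempty (s ↪ Fin D) := Embedding.nonempty_of_card_le (by simpa using hs)
  refine ⟨fun x => extend e (fun i => A i x) 0, fun y => extend e (fun i => B i y) 0,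
    fun x y => ?_⟩
  rw [← sum_coe_sort]
  refine Fintype.sum_of_injective e e.injective _ _ (fun d hd => ?_) (fun i => ?_)
  · dsimp only
    rw [extend_apply' _ _ _ hd, Pi.zero_apply, zero_mul]
  · simp only [e.injective.extend_apply]

def gradedMultiIndices (ι : Type*) [Fintype ι] [DecidableEq ι] (N : ℕ) :
    Finset (Σ _ : Fin N, ι → ℕ) :=
  univ.sigma fun k => piAntidiag univ (k : ℕ)

@[simp]
lemma mem_gradedMultiIndices {ι : Type*} [Fintype ι] [DecidableEq ι] {N : ℕ}
    {x : Σ _ : Fin N, ι → ℕ} : x ∈ gradedMultiIndices ι N ↔ ∑ i, x.2 i = x.1 := by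
  simp [gradedMultiIndices]

lemma card_piAntidiag_fin_succ (S K : ℕ) :
    #(piAntidiag (univ : Finset (Fin (S + 1))) K) = (K + S).choose S := by
  rw [← map_sym_eq_piAntidiag, card_map, sym_univ, card_univ, Sym.card_sym_eq_choose,
    Fintype.card_fin, show S + 1 + K - 1 = K + S by omega, Nat.choose_symm_add]

lemma card_gradedMultiIndices_le (S K : ℕ) :
    #(gradedMultiIndices (Fin S) (K + 1)) ≤ (K + S).choose S := by
  rw [← card_piAntidiag_fin_succ]
  refine card_le_card_of_injOn (fun x => Fin.snoc x.2 (K - x.1)) (fun x hx => ?_)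
    (fun x hx y hy hxy => ?_)
  · rw [mem_coe, mem_gradedMultiIndices] at hx
    simp only [mem_coe, mem_piAntidiag, mem_univ, implies_true, and_true]
    rw [Fin.sum_univ_castSucc]
    simp only [Fin.snoc_castSucc, Fin.snoc_last]
    have := x.1.isLt
    omega
  · rw [mem_coe, mem_gradedMultiIndices] at hx hy
    have hsnd : x.2 = y.2 := funext fun i => by simpa using congrFun hxy i.castSucc
    have hfst : x.1 = y.1 := Fin.ext (by rw [← hx, ← hy, hsnd])
    exact Sigma.ext hfst (heq_of_eq hsnd)

lemma sum_mul_sum_mul_pow_eq_sum_gradedMultiIndices {ι R : Type*} [Fintype ι] [DecidableEq ι]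
    [CommSemiring R] {N : ℕ} (c : Fin N → R) (a b : ι → R) :
    ∑ k, c k * (∑ i, a i * b i) ^ (k : ℕ) =
      ∑ x ∈ gradedMultiIndices ι N,
        (c x.1 * Nat.multinomial univ x.2 * ∏ i, a i ^ x.2 i) * ∏ i, b i ^ x.2 i := by
  rw [gradedMultiIndices, sum_sigma]
  refine sum_congr rfl fun k _ => ?_
  simp_rw [sum_pow_eq_sum_piAntidiag, mul_sum, mul_pow, prod_mul_distrib, mul_assoc]

theorem mc_repar_taylor_absorbed_shift_general {Θ Ξ : Type*} (S K : ℕ)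
    (η : Fin S → Θ → ℝ) (T : Fin S → Ξ → ℝ) (a : ℝ) (c : Fin (K + 1) → ℝ)
    (j : Fin S) (c₀ : ℝ) (hc₀ : c₀ ≠ 0) (hTj : ∀ ξ : Ξ, T j ξ = c₀) :
    ∀ M : ℕ, ∃ (n : Θ → Fin ((K + S).choose S - 1) → ℝ)
      (t : (Fin M → Ξ) → Fin ((K + S).choose S - 1) → ℝ) (r : ℝ),
      ∀ (θ : Θ) (ξ : Fin M → Ξ),
        ∑ i : Fin M, ∑ k : Fin (K + 1),
            c k * (∑ s : Fin S, η s θ * T s (ξ i) - a) ^ (k : ℕ) =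
          (∑ j', n θ j' * t ξ j') + r := by
  intro M
  set u : Θ → Fin S → ℝ := fun θ s => η s θ - (Pi.single j (a / c₀) : Fin S → ℝ) s
  have hshift (θ : Θ) (x : Ξ) : ∑ s, η s θ * T s x - a = ∑ s, u θ s * T s x := by
    simp [u, sub_mul, Pi.single_apply, hTj, hc₀]
  set P := gradedMultiIndices (Fin S) (K + 1)
  have hzero : (⟨0, 0⟩ : Σ _ : Fin (K + 1), Fin S → ℕ) ∈ P := by simp [P]
  obtain ⟨n, t, hnt⟩ := (P.erase ⟨0, 0⟩).exists_sum_fin_mul_eq_sum_mul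
    (D := (K + S).choose S - 1)
    (by
      rw [card_erase_of_mem hzero]
      exact Nat.sub_le_sub_right (card_gradedMultiIndices_le S K) 1)
    (fun x θ => c x.1 * Nat.multinomial univ x.2 * ∏ s, u θ s ^ x.2 s)
    (fun x (ξ : Fin M → Ξ) => ∑ i, ∏ s, T s (ξ i) ^ x.2 s)
  refine ⟨n, t, c 0 * M, fun θ ξ => ?_⟩
  have hmultinomial : Nat.multinomial (univ : Finset (Fin S)) 0 = 1 := by simp [Nat.multinomial]
  simp_rw [hshift, sum_mul_sum_mul_pow_eq_sum_gradedMultiIndices]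
  rw [sum_comm, ← add_sum_erase _ _ hzero]
  simp_rw [← mul_sum]
  rw [hnt, add_comm]
  simp [hmultinomial]

/-- Theorem 4, second route: if one sufficient statistic is a nonzero constant
(`T j ≡ c₀ ≠ 0`, e.g. the location-scale family), the shift `-a` can be
absorbed (Lemma 1), and the Monte Carlo sum of the degree-`K` Taylor
approximation of `g` admits, for every `M`, a factorization of size
`D = C(K + S, S) - 1` independent of `M`, up to a constant remainder. -/
theorem mc_repar_taylor_absorbed_shift {Θ Ξ : Type*} (S K : ℕ) (hS : 2 ≤ S)
    (η : Fin S → Θ → ℝ) (T : Fin S → Ξ → ℝ) (a : ℝ) (c : Fin (K + 1) → ℝ)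
    (j : Fin S) (c₀ : ℝ) (hc₀ : c₀ ≠ 0) (hTj : ∀ ξ : Ξ, T j ξ = c₀) :
    ∀ M : ℕ, ∃ (n : Θ → Fin ((K + S).choose S - 1) → ℝ)
      (t : (Fin M → Ξ) → Fin ((K + S).choose S - 1) → ℝ) (r : ℝ),
      ∀ (θ : Θ) (ξ : Fin M → Ξ),
        ∑ i : Fin M, ∑ k : Fin (K + 1),
            c k * (∑ s : Fin S, η s θ * T s (ξ i) - a) ^ (k : ℕ) =
          (∑ j', n θ j' * t ξ j') + r :=
  mc_repar_taylor_absorbed_shift_general S K η T a c j c₀ hc₀ hTj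
end
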